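/- arXiv:2101.08722 — 4 statements merged into one kernel-verified Lean document; each statement's English description precedes it below -/
import Mathlib

section
/- CPT satisfies strict first-order stochastic dominance in the following sense: if lottery L' is obtained from lottery L by shifting a positive amount of probability mass from an outcome γ to an outcome γ' with strictly higher value v(γ') > v(γ), then the CPT value satisfies V(L') > V(L), provided the probability weighting functions are strictly increasing. -/
open Finset

noncomputable def cumC (k : ℕ) (p : Fin k → ℝ) (β : Equiv.Perm (Fin k)) (j : ℕ) : ℝ :=
  ∑ l : Fin k, if (l : ℕ) < j then p (β l) else 0

noncomputable def cumT (k : ℕ) (p : Fin k → ℝ) (β : Equiv.Perm (Fin k)) (j : ℕ) : ℝ :=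
  ∑ l : Fin k, if j ≤ (l : ℕ) then p (β l) else 0

noncomputable def piPlus (k : ℕ) (p : Fin k → ℝ) (β : Equiv.Perm (Fin k)) (wp : ℝ → ℝ)
    (j : ℕ) : ℝ :=
  wp (cumC k p β (j + 1)) - wp (cumC k p β j)

noncomputable def piMinus (k : ℕ) (p : Fin k → ℝ) (β : Equiv.Perm (Fin k)) (wm : ℝ → ℝ)
    (j : ℕ) : ℝ :=
  wm (cumT k p β j) - wm (cumT k p β (j + 1))

noncomputable def cptValue (k : ℕ) (p v : Fin k → ℝ) (β : Equiv.Perm (Fin k)) (jr : ℕ)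
    (wp wm : ℝ → ℝ) : ℝ :=
  ∑ j : Fin k,
    if (j : ℕ) < jr then piPlus k p β wp j * v (β j) else piMinus k p β wm j * v (β j)

/-!
Let `u₀ ≥ ⋯ ≥ u_{k-1}` be the values in decreasing order, `u_k = 0`, and `Cⱼ` the probability of
the `j` best outcomes. Summation by parts writes the CPT value, up to a term not depending on the
probabilities, as `∑ⱼ w⁺(Cⱼ₊₁) Δ⁺ⱼ - w⁻(1 - Cⱼ₊₁) Δ⁻ⱼ`, where `Δ⁺ⱼ` and `Δ⁻ⱼ` are the decrements of
`max u 0` and `min u 0` from `uⱼ` to `uⱼ₊₁`. Apart from the last summand, where `C_k = 1` for every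
lottery, these decrements are nonnegative and vanish unless `uⱼ₊₁ < uⱼ`, and then
`Cⱼ₊₁ = P(v ≥ uⱼ)` is a value of the decumulative distribution. Moving mass from `a` to the better
outcome `b` raises the decumulative distribution everywhere, strictly at `v b`, so every summand
weakly increases and the one at the last rank of value `v b` strictly increases.
-/

section Decumulative

variable {ι : Type*}

noncomputable def decumulative [Fintype ι] (p v : ι → ℝ) (t : ℝ) : ℝ :=
  ∑ i, if t ≤ v i then p i else 0

variable [DecidableEq ι] {a b : ι}

lemma shift_apply (p : ι → ℝ) (hab : a ≠ b) (ε : ℝ) (j : ι) :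
    (if j = a then p a - ε else if j = b then p b + ε else p j)
      = p j - (if j = a then ε else 0) + (if j = b then ε else 0) := by
  by_cases hja : j = a
  · subst hja; simp [hab]
  · by_cases hjb : j = b
    · subst hjb; simp [hja]
    · simp [hja, hjb]

variable [Fintype ι]

lemma sum_shift (p : ι → ℝ) (hab : a ≠ b) (ε : ℝ) :
    ∑ j, (if j = a then p a - ε else if j = b then p b + ε else p j) = ∑ j, p j := by
  simp only [shift_apply p hab, sum_add_distrib, sum_sub_distrib, sum_ite_eq', mem_univ, if_true]
  ring

lemma decumulative_shift (p v : ι → ℝ) (hab : a ≠ b) (ε t : ℝ) :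
    decumulative (fun j => if j = a then p a - ε else if j = b then p b + ε else p j) v t
      = decumulative p v t - (if t ≤ v a then ε else 0) + (if t ≤ v b then ε else 0) := by
  have h : ∀ j,
      (if t ≤ v j then p j - (if j = a then ε else 0) + (if j = b then ε else 0) else 0)
        = (if t ≤ v j then p j else 0) - (if j = a then (if t ≤ v a then ε else 0) else 0)
          + (if j = b then (if t ≤ v b then ε else 0) else 0) := by
    intro j
    by_cases hja : j = a <;> by_cases hjb : j = b <;> subst_vars <;> split_ifs <;> simp_all
  simp only [decumulative, shift_apply p hab, h, sum_add_distrib, sum_sub_distrib, sum_ite_eq',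
    mem_univ, if_true]

end Decumulative

lemma sum_range_sub_mul_by_parts (f g : ℕ → ℝ) (n : ℕ) :
    ∑ j ∈ range n, (f (j + 1) - f j) * g j
      = ∑ j ∈ range n, f (j + 1) * (g j - g (j + 1)) + f n * g n - f 0 * g 0 := by
  induction n with
  | zero => simp
  | succ n ih => rw [sum_range_succ, sum_range_succ, ih]; ring

section Ranks

variable {k : ℕ}

-- The value `0` past the last rank makes the summation by parts below end without a boundary term.
noncomputable def rankedValue (k : ℕ) (v : Fin k → ℝ) (β : Equiv.Perm (Fin k)) (j : ℕ) : ℝ :=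
  if h : j < k then v (β ⟨j, h⟩) else 0

variable {v : Fin k → ℝ} {β β' : Equiv.Perm (Fin k)}

@[simp]
lemma rankedValue_fin (j : Fin k) : rankedValue k v β j = v (β j) := dif_pos j.isLt

@[simp]
lemma rankedValue_self : rankedValue k v β k = 0 := dif_neg (lt_irrefl k)

lemma rankedValue_succ_le (hβ : Antitone (v ∘ β)) {j : ℕ} (hj : j + 1 < k) :
    rankedValue k v β (j + 1) ≤ rankedValue k v β j := by
  rw [rankedValue, rankedValue, dif_pos hj, dif_pos (by omega)]
  exact hβ (Fin.mk_le_mk.mpr j.le_succ)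

lemma rankedValue_eq_of_antitone (hβ : Antitone (v ∘ β)) (hβ' : Antitone (v ∘ β')) :
    rankedValue k v β' = rankedValue k v β := by
  funext j
  unfold rankedValue
  split_ifs
  · exact congrFun (Tuple.unique_antitone hβ' hβ) _
  · rfl

end Ranks

section Cumulative

variable {k : ℕ} {p v : Fin k → ℝ} {β : Equiv.Perm (Fin k)}

@[simp]
lemma cumC_zero : cumC k p β 0 = 0 := by
  simp [cumC]

@[simp]
lemma cumC_self : cumC k p β k = ∑ i, p i := by
  simp only [cumC, Fin.is_lt, if_true]
  exact Equiv.sum_comp β p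

lemma cumT_eq_sum_sub_cumC (n : ℕ) : cumT k p β n = ∑ i, p i - cumC k p β n := by
  rw [eq_sub_iff_add_eq, cumT, cumC, ← sum_add_distrib, ← Equiv.sum_comp β p]
  refine sum_congr rfl fun l _ => ?_
  by_cases h : (l : ℕ) < n
  · simp [h, not_le.mpr h]
  · simp [h, not_lt.mp h]

lemma cumC_mem_Icc (hp : ∀ i, 0 ≤ p i) (hsum : ∑ i, p i = 1) (n : ℕ) :
    cumC k p β n ∈ Set.Icc (0 : ℝ) 1 := by
  have hT : 0 ≤ cumT k p β n := sum_nonneg fun l _ => by split_ifs <;> simp [hp]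
  rw [cumT_eq_sum_sub_cumC, hsum] at hT
  exact ⟨sum_nonneg fun l _ => by split_ifs <;> simp [hp], by linarith⟩

lemma cumC_succ_eq_decumulative (hβ : Antitone (v ∘ β)) {j : ℕ} (hj : j < k)
    (hdesc : j + 1 < k → rankedValue k v β (j + 1) < rankedValue k v β j) :
    cumC k p β (j + 1) = decumulative p v (rankedValue k v β j) := by
  rw [cumC, decumulative, ← Equiv.sum_comp β (fun i => if _ ≤ v i then p i else 0)]
  refine sum_congr rfl fun l _ => if_congr ?_ rfl rfl
  constructor
  · intro hl
    rw [rankedValue, dif_pos hj]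
    exact hβ (Fin.mk_le_mk.mpr (by omega) : l ≤ ⟨j, hj⟩)
  · intro hl
    by_contra hlj
    have hj1 : j + 1 < k := by omega
    have hlow : v (β l) ≤ rankedValue k v β (j + 1) := by
      rw [rankedValue, dif_pos hj1]
      exact hβ (Fin.mk_le_mk.mpr (by omega) : ⟨j + 1, hj1⟩ ≤ l)
    exact absurd (hdesc hj1) (not_lt.mpr (hl.trans hlow))

end Cumulative

lemma cptValue_eq_sum_by_parts {k : ℕ} {p v : Fin k → ℝ} {β : Equiv.Perm (Fin k)} {jr : ℕ}
    (wp wm : ℝ → ℝ) (hgain : ∀ j : Fin k, (j : ℕ) < jr ↔ 0 ≤ v (β j)) :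
    cptValue k p v β jr wp wm
      = ∑ j ∈ range k,
          (wp (cumC k p β (j + 1))
              * (max (rankedValue k v β j) 0 - max (rankedValue k v β (j + 1)) 0)
            - wm (cumT k p β (j + 1))
              * (min (rankedValue k v β j) 0 - min (rankedValue k v β (j + 1)) 0))
        - wp 0 * max (rankedValue k v β 0) 0 + wm (∑ i, p i) * min (rankedValue k v β 0) 0 := by
  set u := rankedValue k v β
  set C := fun n => wp (cumC k p β n)
  set T := fun n => wm (cumT k p β n)
  have hsplit : ∀ j : Fin k,
      (if (j : ℕ) < jr then piPlus k p β wp j * v (β j) else piMinus k p β wm j * v (β j))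
        = (C (j + 1) - C j) * max (u j) 0 - (T (j + 1) - T j) * min (u j) 0 := by
    intro j
    simp only [u, C, T, rankedValue_fin, piPlus, piMinus]
    by_cases h : (j : ℕ) < jr
    · rw [if_pos h, max_eq_left ((hgain j).mp h), min_eq_right ((hgain j).mp h)]
      ring
    · have hneg : v (β j) ≤ 0 := (not_le.mp (mt (hgain j).mpr h)).le
      rw [if_neg h, max_eq_right hneg, min_eq_left hneg]
      ring
  rw [cptValue, sum_congr rfl fun j _ => hsplit j,
    Fin.sum_univ_eq_sum_range (fun j => (C (j + 1) - C j) * max (u j) 0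
      - (T (j + 1) - T j) * min (u j) 0), sum_sub_distrib,
    sum_range_sub_mul_by_parts C, sum_range_sub_mul_by_parts T]
  simp only [u, C, T, rankedValue_self, cumC_zero, max_self, min_self, mul_zero, sub_zero,
    cumT_eq_sum_sub_cumC 0, sum_sub_distrib]
  ring

section Weights

variable {wp wm : ℝ → ℝ} {x y u u' : ℝ}

lemma weighted_decrement_le (hwp : MonotoneOn wp (Set.Icc 0 1))
    (hwm : MonotoneOn wm (Set.Icc 0 1))
    (hx : x ∈ Set.Icc (0 : ℝ) 1) (hy : y ∈ Set.Icc (0 : ℝ) 1) (hxy : x ≤ y) (hu : u' ≤ u) :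
    wp x * (max u 0 - max u' 0) - wm (1 - x) * (min u 0 - min u' 0)
      ≤ wp y * (max u 0 - max u' 0) - wm (1 - y) * (min u 0 - min u' 0) := by
  have hx' : 1 - x ∈ Set.Icc (0 : ℝ) 1 := ⟨by linarith [hx.2], by linarith [hx.1]⟩
  have hy' : 1 - y ∈ Set.Icc (0 : ℝ) 1 := ⟨by linarith [hy.2], by linarith [hy.1]⟩
  gcongr
  · linarith [max_le_max_right 0 hu]
  · exact hwp hx hy hxy
  · linarith [min_le_min_right 0 hu]
  · exact hwm hy' hx' (by linarith)

lemma weighted_decrement_lt (hwp : StrictMonoOn wp (Set.Icc 0 1))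
    (hwm : StrictMonoOn wm (Set.Icc 0 1))
    (hx : x ∈ Set.Icc (0 : ℝ) 1) (hy : y ∈ Set.Icc (0 : ℝ) 1) (hxy : x < y) (hu : u' < u) :
    wp x * (max u 0 - max u' 0) - wm (1 - x) * (min u 0 - min u' 0)
      < wp y * (max u 0 - max u' 0) - wm (1 - y) * (min u 0 - min u' 0) := by
  have hx' : 1 - x ∈ Set.Icc (0 : ℝ) 1 := ⟨by linarith [hx.2], by linarith [hx.1]⟩
  have hy' : 1 - y ∈ Set.Icc (0 : ℝ) 1 := ⟨by linarith [hy.2], by linarith [hy.1]⟩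
  have hpos : 0 ≤ max u 0 - max u' 0 := by linarith [max_le_max_right 0 hu.le]
  have hneg : 0 ≤ min u 0 - min u' 0 := by linarith [min_le_min_right 0 hu.le]
  have hwpxy := hwp hx hy hxy
  have hwmxy := hwm hy' hx' (by linarith)
  -- the two decrements add up to `u - u' > 0`, so one of them is positive
  rcases hpos.lt_or_eq with hpos | hpos
  · linarith [mul_lt_mul_of_pos_right hwpxy hpos, mul_le_mul_of_nonneg_right hwmxy.le hneg]
  · have hneg : 0 < min u 0 - min u' 0 := by linarith [max_add_min u 0, max_add_min u' 0]
    linarith [mul_le_mul_of_nonneg_right hwpxy.le hpos.le, mul_lt_mul_of_pos_right hwmxy hneg]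

end Weights

lemma exists_last_rank_eq {k : ℕ} {v : Fin k → ℝ} {β : Equiv.Perm (Fin k)}
    (hβ : Antitone (v ∘ β)) (c : Fin k) :
    ∃ j < k, rankedValue k v β j = v c ∧ (j + 1 < k → rankedValue k v β (j + 1) < v c) := by
  set S := univ.filter fun j : Fin k => v (β j) = v c
  have hS : S.Nonempty := ⟨β.symm c, by simp [S]⟩
  have hmax := (mem_filter.mp (S.max'_mem hS)).2
  refine ⟨S.max' hS, (S.max' hS).isLt, by rw [rankedValue_fin, hmax], fun hj => ?_⟩
  refine (hmax ▸ rankedValue_fin (S.max' hS) ▸ rankedValue_succ_le hβ hj).lt_of_ne fun heq => ?_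
  have hmem : (⟨_, hj⟩ : Fin k) ∈ S := by
    rw [mem_filter, ← heq, rankedValue, dif_pos hj]
    exact ⟨mem_univ _, rfl⟩
  exact absurd (S.le_max' _ hmem) (by simp [Fin.le_def])

theorem cptValue_lt_of_decumulative_lt {k : ℕ} {p q v : Fin k → ℝ}
    {β β' : Equiv.Perm (Fin k)} {jr jr' : ℕ} {wp wm : ℝ → ℝ}
    (hp : ∀ i, 0 ≤ p i) (hsum : ∑ i, p i = 1) (hq : ∀ i, 0 ≤ q i) (hsumq : ∑ i, q i = 1)
    (hwp : StrictMonoOn wp (Set.Icc 0 1)) (hwm : StrictMonoOn wm (Set.Icc 0 1))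
    (hβ : Antitone (v ∘ β)) (hβ' : Antitone (v ∘ β'))
    (hgain : ∀ j : Fin k, (j : ℕ) < jr ↔ 0 ≤ v (β j))
    (hgain' : ∀ j : Fin k, (j : ℕ) < jr' ↔ 0 ≤ v (β' j))
    (hle : ∀ t, decumulative p v t ≤ decumulative q v t) (c : Fin k)
    (hlt : decumulative p v (v c) < decumulative q v (v c)) :
    cptValue k p v β jr wp wm < cptValue k q v β' jr' wp wm := by
  have hranked := rankedValue_eq_of_antitone hβ hβ'
  rw [cptValue_eq_sum_by_parts wp wm hgain, cptValue_eq_sum_by_parts wp wm hgain', hranked]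
  simp only [cumT_eq_sum_sub_cumC, hsum, hsumq]
  gcongr ?_ - _ + _
  have hcum : ∀ j < k, (j + 1 < k → rankedValue k v β (j + 1) < rankedValue k v β j) →
      cumC k p β (j + 1) = decumulative p v (rankedValue k v β j) ∧
        cumC k q β' (j + 1) = decumulative q v (rankedValue k v β j) := fun j hj hdesc =>
    ⟨cumC_succ_eq_decumulative hβ hj hdesc,
      hranked ▸ cumC_succ_eq_decumulative hβ' hj (hranked ▸ hdesc)⟩
  obtain ⟨j₀, hj₀, hu₀, hdesc₀⟩ := exists_last_rank_eq hβ c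
  obtain ⟨hCp₀, hCq₀⟩ := hcum j₀ hj₀ (fun h => hu₀ ▸ hdesc₀ h)
  apply sum_lt_sum
  · intro j hj
    rw [mem_range] at hj
    rcases (show j + 1 ≤ k from hj).eq_or_lt with hk | hk
    · rw [hk, cumC_self, cumC_self, hsum, hsumq]
    rcases (rankedValue_succ_le hβ hk).lt_or_eq with hdesc | heq
    · obtain ⟨hCp, hCq⟩ := hcum j hj fun _ => hdesc
      exact weighted_decrement_le hwp.monotoneOn hwm.monotoneOn (cumC_mem_Icc hp hsum _)
        (cumC_mem_Icc hq hsumq _) (hCp ▸ hCq ▸ hle _) hdesc.le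
    · simp [heq]
  · -- at the last rank both cumulative masses are `1`, which `hlt` rules out
    have hj₁ : j₀ + 1 < k := by
      refine (show j₀ + 1 ≤ k from hj₀).lt_of_ne fun hk => hlt.ne ?_
      rw [← hu₀, ← hCp₀, ← hCq₀, hk, cumC_self, cumC_self, hsum, hsumq]
    refine ⟨j₀, mem_range.mpr hj₀, weighted_decrement_lt hwp hwm (cumC_mem_Icc hp hsum _)
      (cumC_mem_Icc hq hsumq _) ?_ (hu₀ ▸ hdesc₀ hj₁)⟩
    rwa [hCp₀, hCq₀, hu₀]

theorem cpt_strict_stochastic_dominance_general (k : ℕ) (p p' v : Fin k → ℝ)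
    (a b : Fin k) (hab : a ≠ b) (hv : v a < v b)
    (ε : ℝ) (hε : 0 < ε) (hεa : ε ≤ p a)
    (hp : ∀ i, 0 ≤ p i) (hsum : ∑ i, p i = 1)
    (hp' : p' = fun j => if j = a then p a - ε else if j = b then p b + ε else p j)
    (wp wm : ℝ → ℝ)
    (hwp : StrictMonoOn wp (Set.Icc (0:ℝ) 1)) (hwm : StrictMonoOn wm (Set.Icc (0:ℝ) 1))
    (β β' : Equiv.Perm (Fin k)) (jr jr' : ℕ)
    (hsort : ∀ j j' : Fin k, j ≤ j' → v (β j') ≤ v (β j))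
    (hsort' : ∀ j j' : Fin k, j ≤ j' → v (β' j') ≤ v (β' j))
    (hgain : ∀ j : Fin k, (j : ℕ) < jr ↔ 0 ≤ v (β j))
    (hgain' : ∀ j : Fin k, (j : ℕ) < jr' ↔ 0 ≤ v (β' j)) :
    cptValue k p v β jr wp wm < cptValue k p' v β' jr' wp wm := by
  subst hp'
  have hp'_nonneg : ∀ j, 0 ≤ if j = a then p a - ε else if j = b then p b + ε else p j := by
    intro j
    split_ifs
    · linarith
    · linarith [hp b]
    · exact hp j
  refine cptValue_lt_of_decumulative_lt hp hsum hp'_nonneg (by rw [sum_shift p hab, hsum])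
    hwp hwm hsort hsort' hgain hgain' (fun t => ?_) b ?_
  · rw [decumulative_shift p v hab]
    split_ifs <;> linarith
  · rw [decumulative_shift p v hab, if_neg (not_le.mpr hv), if_pos le_rfl]
    linarith

/-- CPT satisfies strict first-order stochastic dominance: shifting positive probability
mass `ε` from an outcome `a` to a strictly better outcome `b` strictly increases the CPT
value, provided the probability weighting functions are strictly increasing. -/
theorem cpt_strict_stochastic_dominance (k : ℕ) (p p' v : Fin k → ℝ)
    (a b : Fin k) (hab : a ≠ b) (hv : v a < v b)
    (ε : ℝ) (hε : 0 < ε) (hεa : ε ≤ p a)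
    (hp : ∀ i, 0 ≤ p i) (hsum : ∑ i, p i = 1)
    (hp' : p' = fun j => if j = a then p a - ε else if j = b then p b + ε else p j)
    (wp wm : ℝ → ℝ)
    (hwp : StrictMonoOn wp (Set.Icc (0:ℝ) 1)) (hwm : StrictMonoOn wm (Set.Icc (0:ℝ) 1))
    (hwp0 : wp 0 = 0) (hwp1 : wp 1 = 1) (hwm0 : wm 0 = 0) (hwm1 : wm 1 = 1)
    (β β' : Equiv.Perm (Fin k)) (jr jr' : ℕ)
    (hsort : ∀ j j' : Fin k, j ≤ j' → v (β j') ≤ v (β j))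
    (hsort' : ∀ j j' : Fin k, j ≤ j' → v (β' j') ≤ v (β' j))
    (hgain : ∀ j : Fin k, (j : ℕ) < jr ↔ 0 ≤ v (β j))
    (hgain' : ∀ j : Fin k, (j : ℕ) < jr' ↔ 0 ≤ v (β' j)) :
    cptValue k p v β jr wp wm < cptValue k p' v β' jr' wp wm :=
  cpt_strict_stochastic_dominance_general k p p' v a b hab hv ε hε hεa hp hsum hp' wp wm hwp hwm β
    β' jr jr' hsort hsort' hgain hgain'
end

section
/- (Revelation principle for mediated Bayes-Nash equilibrium) If an allocation choice function f is implementable in F-Bayes-Nash equilibrium by a mediated mechanism M = ((Φ_i), D, (Ψ_i), h) with equilibrium strategy profile τ, then f is truthfully implementable in F-Bayes-Nash equilibrium by the direct mediated mechanism M^d with message sets Φ_i' = Φ_i × (Ψ_i)^{Θ_i}, mediator distribution D'(φ, (ψ_i^{θ_i'})) = D(φ) Π_i Π_{θ_i'} τ_i(ψ_i^{θ_i'}|φ_i, θ_i'), and allocation function h^d(φ', θ') = h(φ, (ψ_i^{θ_i'})_i). -/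
open Finset

variable {ι : Type} [Fintype ι] [DecidableEq ι]
variable {Φ Θ Ψ : ι → Type}
variable [∀ i, Fintype (Φ i)] [∀ i, DecidableEq (Φ i)]
variable [∀ i, Fintype (Θ i)] [∀ i, DecidableEq (Θ i)]
variable [∀ i, Fintype (Ψ i)] [∀ i, DecidableEq (Ψ i)]
variable {A : Type} [Fintype A]

/-- Marginal of a distribution on profiles on the `i`-th coordinate. -/
noncomputable def marg {X : ι → Type} [∀ i, Fintype (X i)] [∀ i, DecidableEq (X i)]
    (F : (∀ i, X i) → ℝ) (i : ι) (x : X i) : ℝ :=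
  ∑ y : ∀ j, X j, if y i = x then F y else 0

/-- The distribution on allocations faced by player `i` who has received message `φi`, has
type `ti`, and signals `ψi`, in the mediated mechanism `(Φ, D, Ψ, h)` with prior `F` when the
opponents play the strategy profile `τ`. -/
noncomputable def medMu (D : (∀ i, Φ i) → ℝ) (F : (∀ i, Θ i) → ℝ)
    (h : (∀ i, Φ i) → (∀ i, Ψ i) → A → ℝ) (τ : ∀ i, Φ i → Θ i → Ψ i → ℝ)
    (i : ι) (φi : Φ i) (ti : Θ i) (ψi : Ψ i) (a : A) : ℝ :=
  (∑ φ : ∀ j, Φ j, if φ i = φi then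
      D φ * ∑ θ : ∀ j, Θ j, (if θ i = ti then
        F θ * ∑ ψ : ∀ j, Ψ j, (if ψ i = ψi then
          (∏ j ∈ Finset.univ.erase i, τ j (φ j) (θ j) (ψ j)) * h φ ψ a
        else 0)
      else 0)
    else 0) / (marg D i φi * marg F i ti)

/-- `τ` is an `F`-Bayes-Nash equilibrium of the mediated mechanism `(Φ, D, Ψ, h)`. -/
def medBNE (D : (∀ i, Φ i) → ℝ) (F : (∀ i, Θ i) → ℝ)
    (h : (∀ i, Φ i) → (∀ i, Ψ i) → A → ℝ) (τ : ∀ i, Φ i → Θ i → Ψ i → ℝ)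
    (W : ∀ i, Θ i → (A → ℝ) → ℝ) : Prop :=
  ∀ (i : ι) (φi : Φ i) (ti : Θ i), 0 < marg D i φi → 0 < marg F i ti →
    ∀ ψi : Ψ i, 0 < τ i φi ti ψi → ∀ ψi' : Ψ i,
      W i ti (fun a => medMu D F h τ i φi ti ψi' a) ≤
        W i ti (fun a => medMu D F h τ i φi ti ψi a)

/-- The allocation choice function induced by the strategy profile `τ` in the mediated
mechanism `(Φ, D, Ψ, h)`. -/
noncomputable def medInduced (D : (∀ i, Φ i) → ℝ)
    (h : (∀ i, Φ i) → (∀ i, Ψ i) → A → ℝ) (τ : ∀ i, Φ i → Θ i → Ψ i → ℝ)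
    (θ : ∀ i, Θ i) (a : A) : ℝ :=
  ∑ φ : ∀ j, Φ j, D φ * ∑ ψ : ∀ j, Ψ j, (∏ i, τ i (φ i) (θ i) (ψ i)) * h φ ψ a

/-! The mediator of the direct mechanism draws `φ ∼ D` and, independently for every player `i`
and every type `t` of `i`, a signal `s_i t ∼ τ_i(· | φ_i, t)`; it sends `(φ_i, s_i)` to `i`, and
reports `θ'` produce `h(φ, (s_j (θ'_j))_j)`. Since the opponents' signals are independent across
types, `s_j (θ_j)` has law `τ_j(· | φ_j, θ_j)` whatever `θ_j` is. Hence a player who received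
`(φ_i, s_i)` and reports `t'` faces exactly the allocation distribution of the original mechanism
at message `φ_i` and signal `s_i t'`: the weight `∏_t τ_i(s_i t | φ_i, t)` of `s_i` cancels
against the same factor in the marginal of the new mediator. Truth-telling thus inherits the
equilibrium inequalities of `τ` (a message `(φ_i, s_i)` of positive probability only recommends
signals `s_i t` played with positive probability), and it induces the same allocation choice
function. -/

open Function

section PiSums

variable {κ R : Type*} [Fintype κ] [DecidableEq κ] [CommSemiring R]

theorem sum_pi_prod_eq_sum_sum {X Y : κ → Type*} [∀ j, Fintype (X j)] [∀ j, Fintype (Y j)]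
    (f : (∀ j, X j × Y j) → R) :
    ∑ z, f z = ∑ x : ∀ j, X j, ∑ y : ∀ j, Y j, f fun j => (x j, y j) := by
  rw [← (Equiv.arrowProdEquivProdArrow κ X Y).symm.sum_comp, Fintype.sum_prod_type]
  rfl

theorem sum_piFinset_prod_mul_comp {X Y : κ → Type*} [∀ j, Fintype (Y j)]
    [∀ j, DecidableEq (Y j)] (S : ∀ j, Finset (X j)) (g : ∀ j, X j → R)
    (p : ∀ j, X j → Y j) (H : (∀ j, Y j) → R) :
    ∑ x ∈ Fintype.piFinset S, (∏ j, g j (x j)) * H (fun j => p j (x j)) =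
      ∑ y, (∏ j, ∑ x ∈ S j, if p j x = y j then g j x else 0) * H y := by
  simp_rw [prod_univ_sum, Fintype.prod_ite_zero, sum_mul]
  rw [sum_comm]
  refine sum_congr rfl fun x _ => ?_
  simp [← funext_iff]

variable {X : κ → Type*} [∀ j, Fintype (X j)]

theorem prod_sum_update_univ_singleton (i : κ) (a : X i) (f : ∀ j, X j → R) :
    ∏ j, ∑ x ∈ update (fun j => (univ : Finset (X j))) i {a} j, f j x =
      f i a * ∏ j ∈ univ.erase i, ∑ x, f j x := by
  calc _ = ∏ j, update (fun j => ∑ x, f j x) i (f i a) j :=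
        Fintype.prod_congr _ _ fun j ↦ by obtain rfl | hji := eq_or_ne j i <;> simp [*]
    _ = _ := by simp [prod_update_of_mem, erase_eq]

variable [∀ j, DecidableEq (X j)]

theorem sum_ite_apply_eq_sum_piFinset (i : κ) (a : X i) (f : (∀ j, X j) → R) :
    ∑ x, (if x i = a then f x else 0) =
      ∑ x ∈ Fintype.piFinset (update (fun j => (univ : Finset (X j))) i {a}), f x := by
  rw [Fintype.piFinset_update_singleton_eq_filter_piFinset_eq _ i (mem_univ a),
    Fintype.piFinset_univ, sum_filter]

theorem sum_ite_apply_prod_eq_mul_prod_erase (i : κ) (a : X i) (g : ∀ j, X j → R) :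
    ∑ x : ∀ j, X j, (if x i = a then ∏ j, g j (x j) else 0) =
      g i a * ∏ j ∈ univ.erase i, ∑ x, g j x := by
  rw [sum_ite_apply_eq_sum_piFinset, ← prod_univ_sum, prod_sum_update_univ_singleton]

theorem sum_prod_ite_eq_mul (θ : ∀ j, X j) (K : (∀ j, X j) → R) :
    ∑ θ', (∏ j, if θ' j = θ j then (1 : R) else 0) * K θ' = K θ := by
  simp [Fintype.prod_boole, ← funext_iff]

theorem sum_ite_prod_erase_ite_mul_eq_update (i : κ) (t : X i) (θ : ∀ j, X j)
    (K : (∀ j, X j) → R) :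
    ∑ θ', (if θ' i = t then
        (∏ j ∈ univ.erase i, if θ' j = θ j then (1 : R) else 0) * K θ' else 0) =
      K (update θ i t) := by
  simp [prod_boole, ← ite_and, ← eq_update_iff]

end PiSums

section RandomStrategies

variable {R : Type*} [CommSemiring R]

theorem sum_prod_apply_eq_one {β γ : Type*} [Fintype β] [DecidableEq β] [Fintype γ]
    {k : β → γ → R} (hk : ∀ t, ∑ y, k t y = 1) :
    ∑ s : β → γ, ∏ t, k t (s t) = 1 := by
  simp [← Fintype.prod_sum, hk]

theorem sum_ite_apply_prod_eq_apply {β γ : Type*} [Fintype β] [DecidableEq β] [Fintype γ]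
    [DecidableEq γ] {k : β → γ → R} (hk : ∀ t, ∑ y, k t y = 1) (t : β) (y : γ) :
    ∑ s : β → γ, (if s t = y then ∏ u, k u (s u) else 0) = k t y := by
  simp [sum_ite_apply_prod_eq_mul_prod_erase (X := fun _ => γ), hk]

variable {κ : Type*} [Fintype κ] [DecidableEq κ] {T Y : κ → Type*}
  [∀ j, Fintype (T j)] [∀ j, DecidableEq (T j)] [∀ j, Fintype (Y j)] [∀ j, DecidableEq (Y j)]
  {k : ∀ j, T j → Y j → R}

theorem sum_prod_prod_mul_eval (hk : ∀ j t, ∑ y, k j t y = 1) (θ : ∀ j, T j)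
    (H : (∀ j, Y j) → R) :
    ∑ s : ∀ j, T j → Y j, (∏ j, ∏ t, k j t (s j t)) * H (fun j => s j (θ j)) =
      ∑ ψ, (∏ j, k j (θ j) (ψ j)) * H ψ := by
  rw [← Fintype.piFinset_univ, sum_piFinset_prod_mul_comp (X := fun j => T j → Y j) _
    (fun j s => ∏ t, k j t (s t)) (fun j s => s (θ j))]
  simp only [sum_ite_apply_prod_eq_apply (hk _)]

theorem sum_ite_apply_prod_prod_mul_eval (hk : ∀ j t, ∑ y, k j t y = 1) (i : κ)
    (σ : T i → Y i) (θ : ∀ j, T j) (H : (∀ j, Y j) → R) :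
    ∑ s : ∀ j, T j → Y j,
        (if s i = σ then (∏ j, ∏ t, k j t (s j t)) * H (fun j => s j (θ j)) else 0) =
      (∏ t, k i t (σ t)) *
        ∑ ψ, if ψ i = σ (θ i) then (∏ j ∈ univ.erase i, k j (θ j) (ψ j)) * H ψ else 0 := by
  rw [sum_ite_apply_eq_sum_piFinset, sum_piFinset_prod_mul_comp (X := fun j => T j → Y j) _
    (fun j s => ∏ t, k j t (s t)) (fun j s => s (θ j)), mul_sum]
  refine sum_congr rfl fun ψ _ => ?_
  simp only [prod_sum_update_univ_singleton, sum_ite_apply_prod_eq_apply (hk _),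
    eq_comm (a := σ (θ i)), ite_mul, mul_ite, zero_mul, mul_zero, mul_assoc]

end RandomStrategies

section DirectMechanism

-- Statements mentioning `A` pick up the section variable `[Fintype A]` without using it.
set_option linter.unusedSectionVars false

noncomputable def directMediator (D : (∀ i, Φ i) → ℝ) (τ : ∀ i, Φ i → Θ i → Ψ i → ℝ)
    (φ' : ∀ i, Φ i × (Θ i → Ψ i)) : ℝ :=
  D (fun i => (φ' i).1) * ∏ i, ∏ t : Θ i, τ i (φ' i).1 t ((φ' i).2 t)

def directAllocation (h : (∀ i, Φ i) → (∀ i, Ψ i) → A → ℝ) (φ' : ∀ i, Φ i × (Θ i → Ψ i))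
    (θ' : ∀ i, Θ i) : A → ℝ :=
  h (fun i => (φ' i).1) (fun i => (φ' i).2 (θ' i))

def truthful {M : ι → Type*} (i : ι) (_ : M i) (ti ti' : Θ i) : ℝ :=
  if ti' = ti then 1 else 0

noncomputable def medNum (D : (∀ i, Φ i) → ℝ) (F : (∀ i, Θ i) → ℝ)
    (h : (∀ i, Φ i) → (∀ i, Ψ i) → A → ℝ) (τ : ∀ i, Φ i → Θ i → Ψ i → ℝ)
    (i : ι) (φi : Φ i) (ti : Θ i) (ψi : Ψ i) (a : A) : ℝ :=
  ∑ φ : ∀ j, Φ j, if φ i = φi then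
      D φ * ∑ θ : ∀ j, Θ j, (if θ i = ti then
        F θ * ∑ ψ : ∀ j, Ψ j, (if ψ i = ψi then
          (∏ j ∈ univ.erase i, τ j (φ j) (θ j) (ψ j)) * h φ ψ a
        else 0)
      else 0)
    else 0

variable (D : (∀ i, Φ i) → ℝ) (F : (∀ i, Θ i) → ℝ) (h : (∀ i, Φ i) → (∀ i, Ψ i) → A → ℝ)
  {τ : ∀ i, Φ i → Θ i → Ψ i → ℝ}

theorem medMu_eq_medNum_div (i : ι) (φi : Φ i) (ti : Θ i) (ψi : Ψ i) (a : A) :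
    medMu D F h τ i φi ti ψi a = medNum D F h τ i φi ti ψi a / (marg D i φi * marg F i ti) :=
  rfl

theorem sum_ite_directMediator_mul (i : ι) (φi : Φ i) (si : Θ i → Ψ i)
    (G : (∀ j, Φ j × (Θ j → Ψ j)) → ℝ) :
    ∑ z, (if z i = (φi, si) then directMediator D τ z * G z else 0) =
      ∑ x, if x i = φi then D x * ∑ y : ∀ j, Θ j → Ψ j, (if y i = si then
        (∏ j, ∏ t, τ j (x j) t (y j t)) * G (fun j => (x j, y j)) else 0) else 0 := by
  rw [sum_pi_prod_eq_sum_sum]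
  refine sum_congr rfl fun x _ => ?_
  split_ifs with hx
  · rw [mul_sum]
    refine sum_congr rfl fun y _ => ?_
    simp [hx, directMediator, mul_assoc]
  · simp [hx]

theorem marg_directMediator (hτ : ∀ i φi ti, ∑ ψi, τ i φi ti ψi = 1) (i : ι) (φi : Φ i)
    (si : Θ i → Ψ i) :
    marg (directMediator D τ) i (φi, si) = marg D i φi * ∏ t, τ i φi t (si t) := by
  have h := sum_ite_directMediator_mul D (τ := τ) i φi si 1
  simp only [Pi.one_apply, mul_one] at h
  rw [marg, h, marg, sum_mul]
  refine sum_congr rfl fun x _ => ?_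
  split_ifs with hx
  · rw [sum_ite_apply_prod_eq_mul_prod_erase (X := fun j => Θ j → Ψ j) i si
      (fun j s => ∏ t, τ j (x j) t (s t))]
    simp [sum_prod_apply_eq_one (hτ _ _), hx]
  · simp

theorem medInduced_direct (hτ : ∀ i φi ti, ∑ ψi, τ i φi ti ψi = 1) (θ : ∀ i, Θ i) (a : A) :
    medInduced (directMediator D τ) (directAllocation h) truthful θ a = medInduced D h τ θ a := by
  simp only [medInduced, truthful, sum_prod_ite_eq_mul, sum_pi_prod_eq_sum_sum, directMediator,
    directAllocation]
  refine sum_congr rfl fun x _ => ?_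
  rw [← sum_prod_prod_mul_eval (fun j => hτ j (x j)) θ, mul_sum]
  simp only [mul_assoc]

theorem medNum_direct (hτ : ∀ i φi ti, ∑ ψi, τ i φi ti ψi = 1) (i : ι) (φi : Φ i)
    (si : Θ i → Ψ i) (ti ti' : Θ i) (a : A) :
    medNum (directMediator D τ) F (directAllocation h) truthful i (φi, si) ti ti' a =
      (∏ t, τ i φi t (si t)) * medNum D F h τ i φi ti (si ti') a := by
  have hsignal : ∀ x : ∀ j, Φ j, ∀ θ : ∀ j, Θ j,
      ∑ y : ∀ j, Θ j → Ψ j, (if y i = si then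
        (∏ j, ∏ t, τ j (x j) t (y j t)) * h x (fun j => y j (update θ i ti' j)) a else 0) =
      (∏ t, τ i (x i) t (si t)) * ∑ ψ, if ψ i = si ti' then
        (∏ j ∈ univ.erase i, τ j (x j) (θ j) (ψ j)) * h x ψ a else 0 := by
    intro x θ
    rw [sum_ite_apply_prod_prod_mul_eval (fun j => hτ j (x j)) i si (update θ i ti')
      (fun ψ => h x ψ a), update_self]
    congr 1
    refine sum_congr rfl fun ψ _ => ?_
    rw [prod_congr rfl fun j hj => by rw [update_of_ne (ne_of_mem_erase hj)]]
  simp only [medNum, truthful, sum_ite_prod_erase_ite_mul_eq_update]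
  rw [sum_ite_directMediator_mul, mul_sum]
  refine sum_congr rfl fun x _ => ?_
  split_ifs with hx
  · subst hx
    calc _ = D x * ∑ θ, if θ i = ti then F θ * ∑ y : ∀ j, Θ j → Ψ j, (if y i = si then
            (∏ j, ∏ t, τ j (x j) t (y j t)) * h x (fun j => y j (update θ i ti' j)) a else 0)
          else 0 := by
          simp only [directAllocation, ← sum_filter, mul_sum]
          rw [sum_comm]
          exact sum_congr rfl fun _ _ => sum_congr rfl fun _ _ => by ring
      _ = _ := by
          simp only [hsignal, ← sum_filter, mul_sum]
          exact sum_congr rfl fun _ _ => sum_congr rfl fun _ _ => by ring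
  · simp

theorem medMu_direct (hτ : ∀ i φi ti, ∑ ψi, τ i φi ti ψi = 1) (i : ι) (φi : Φ i)
    (si : Θ i → Ψ i) (hsi : ∏ t, τ i φi t (si t) ≠ 0) (ti ti' : Θ i) (a : A) :
    medMu (directMediator D τ) F (directAllocation h) truthful i (φi, si) ti ti' a =
      medMu D F h τ i φi ti (si ti') a := by
  rw [medMu_eq_medNum_div, medMu_eq_medNum_div, medNum_direct D F h hτ,
    marg_directMediator D hτ, mul_right_comm, mul_comm _ (∏ t, τ i φi t (si t)),
    mul_div_mul_left _ _ hsi]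

theorem marg_nonneg {X : ι → Type} [∀ i, Fintype (X i)] [∀ i, DecidableEq (X i)]
    {G : (∀ i, X i) → ℝ} (hG : ∀ x, 0 ≤ G x) (i : ι) (xi : X i) : 0 ≤ marg G i xi :=
  sum_nonneg fun x _ => by split_ifs; exacts [hG x, le_rfl]

theorem medBNE_direct (W : ∀ i, Θ i → (A → ℝ) → ℝ) (hD : ∀ φ, 0 ≤ D φ)
    (hτ : ∀ i φi ti, (∀ ψi, 0 ≤ τ i φi ti ψi) ∧ ∑ ψi, τ i φi ti ψi = 1)
    (hBNE : medBNE D F h τ W) :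
    medBNE (directMediator D τ) F (directAllocation h) truthful W := by
  have hτ1 i φi ti := (hτ i φi ti).2
  rintro i ⟨φi, si⟩ ti hD' hF ψi hψ ti'
  obtain rfl : ψi = ti := by
    by_contra hne
    simp [truthful, hne] at hψ
  rw [marg_directMediator D hτ1] at hD'
  have hsi := pos_of_mul_pos_right hD' (marg_nonneg hD i φi)
  have hsi_ti : 0 < τ i φi ψi (si ψi) :=
    ((hτ i φi ψi).1 _).lt_of_ne (prod_ne_zero_iff.1 hsi.ne' ψi (mem_univ _)).symm
  simp only [medMu_direct D F h hτ1 i φi si hsi.ne']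
  exact hBNE i φi ψi (pos_of_mul_pos_left hD' hsi.le) hF (si ψi) hsi_ti (si ti')

end DirectMechanism

theorem revelation_principle_mediated_bayes_nash_general
    (D : (∀ i, Φ i) → ℝ) (hD0 : ∀ φ, 0 ≤ D φ)
    (F : (∀ i, Θ i) → ℝ)
    (h : (∀ i, Φ i) → (∀ i, Ψ i) → A → ℝ)
    (τ : ∀ i, Φ i → Θ i → Ψ i → ℝ)
    (hτ : ∀ i φi ti, (∀ ψi, 0 ≤ τ i φi ti ψi) ∧ ∑ ψi, τ i φi ti ψi = 1)
    (W : ∀ i, Θ i → (A → ℝ) → ℝ)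
    (hBNE : medBNE D F h τ W)
    (f : (∀ i, Θ i) → A → ℝ)
    (hf : ∀ θ, 0 < F θ → ∀ a, f θ a = medInduced D h τ θ a) :
    medBNE (Φ := fun i => Φ i × (Θ i → Ψ i)) (Ψ := Θ)
        (fun φ' => D (fun i => (φ' i).1) * ∏ i, ∏ t : Θ i, τ i (φ' i).1 t ((φ' i).2 t))
        F
        (fun φ' θ' => h (fun i => (φ' i).1) (fun i => (φ' i).2 (θ' i)))
        (fun i _ ti ti' => if ti' = ti then (1:ℝ) else 0)
        W
      ∧ ∀ θ, 0 < F θ → ∀ a,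
          f θ a = medInduced (Φ := fun i => Φ i × (Θ i → Ψ i)) (Ψ := Θ)
            (fun φ' => D (fun i => (φ' i).1) * ∏ i, ∏ t : Θ i, τ i (φ' i).1 t ((φ' i).2 t))
            (fun φ' θ' => h (fun i => (φ' i).1) (fun i => (φ' i).2 (θ' i)))
            (fun i _ ti ti' => if ti' = ti then (1:ℝ) else 0)
            θ a :=
  ⟨medBNE_direct D F h W hD0 hτ hBNE, fun θ hθ a =>
    (hf θ hθ a).trans (medInduced_direct D h (fun i φi ti => (hτ i φi ti).2) θ a).symm⟩

/-- Revelation principle for mediated Bayes-Nash equilibrium: if `f` is implementable in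
`F`-Bayes-Nash equilibrium by the mediated mechanism `(Φ, D, Ψ, h)` with equilibrium
strategy profile `τ`, then `f` is truthfully implementable in `F`-Bayes-Nash equilibrium by
the direct mediated mechanism with message sets `Φ_i × (Ψ_i)^{Θ_i}`, mediator distribution
`D'(φ, (ψ_i^{θ_i'})) = D(φ) Π_i Π_{θ_i'} τ_i(ψ_i^{θ_i'} | φ_i, θ_i')`, and allocation
function `h^d(φ', θ') = h(φ, (ψ_i^{θ_i'(i)})_i)`. -/
theorem revelation_principle_mediated_bayes_nash
    (D : (∀ i, Φ i) → ℝ) (hD0 : ∀ φ, 0 ≤ D φ) (hD1 : ∑ φ, D φ = 1)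
    (F : (∀ i, Θ i) → ℝ) (hF0 : ∀ θ, 0 ≤ F θ) (hF1 : ∑ θ, F θ = 1)
    (h : (∀ i, Φ i) → (∀ i, Ψ i) → A → ℝ)
    (hh : ∀ φ ψ, (∀ a, 0 ≤ h φ ψ a) ∧ ∑ a, h φ ψ a = 1)
    (τ : ∀ i, Φ i → Θ i → Ψ i → ℝ)
    (hτ : ∀ i φi ti, (∀ ψi, 0 ≤ τ i φi ti ψi) ∧ ∑ ψi, τ i φi ti ψi = 1)
    (W : ∀ i, Θ i → (A → ℝ) → ℝ)
    (hBNE : medBNE D F h τ W)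
    (f : (∀ i, Θ i) → A → ℝ)
    (hf : ∀ θ, 0 < F θ → ∀ a, f θ a = medInduced D h τ θ a) :
    medBNE (Φ := fun i => Φ i × (Θ i → Ψ i)) (Ψ := Θ)
        (fun φ' => D (fun i => (φ' i).1) * ∏ i, ∏ t : Θ i, τ i (φ' i).1 t ((φ' i).2 t))
        F
        (fun φ' θ' => h (fun i => (φ' i).1) (fun i => (φ' i).2 (θ' i)))
        (fun i _ ti ti' => if ti' = ti then (1:ℝ) else 0)
        W
      ∧ ∀ θ, 0 < F θ → ∀ a,
          f θ a = medInduced (Φ := fun i => Φ i × (Θ i → Ψ i)) (Ψ := Θ)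
            (fun φ' => D (fun i => (φ' i).1) * ∏ i, ∏ t : Θ i, τ i (φ' i).1 t ((φ' i).2 t))
            (fun φ' θ' => h (fun i => (φ' i).1) (fun i => (φ' i).2 (θ' i)))
            (fun i _ ti ti' => if ti' = ti then (1:ℝ) else 0)
            θ a :=
  revelation_principle_mediated_bayes_nash_general D hD0 F h τ hτ W hBNE f hf
end

section
/- For a single player (n = 1), the set of allocation choice functions truthfully implementable in F-Bayes-Nash equilibrium by direct mediated mechanisms equals the convex hull of the set Π_1(F) of F-incentive-compatible functions; moreover, by Carathéodory's theorem, any such f is implementable by a direct mediated mechanism whose message set has at most |Θ_1| × |A| elements. -/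
/-!
A mechanism mixes, with weights `D`, the rules `hd φ`; those recommended with positive
probability are incentive compatible, so the implemented `f` lies in the convex hull of `Π₁(F)`,
and conversely a convex combination of incentive-compatible rules is such a mechanism.
For the size bound, Carathéodory's theorem writes a point of the hull as a positive combination
of affinely independent points of `Π₁(F)`. All of them have total mass `|Θ|`, so their
differences lie in the kernel of the total-mass functional, a proper subspace of `ℝ^(Θ × A)`;
hence there are at most `|Θ| · |A|` of them.
-/

open Finset Module

theorem Finset.sum_smul_mem_convexHull_of_pos {R E ι : Type*} [Field R] [LinearOrder R]
    [IsStrictOrderedRing R] [AddCommGroup E] [Module R E] {t : Finset ι} {w : ι → R}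
    {z : ι → E} {s : Set E} (h₀ : ∀ i ∈ t, 0 ≤ w i) (h₁ : ∑ i ∈ t, w i = 1)
    (hz : ∀ i ∈ t, 0 < w i → z i ∈ s) :
    ∑ i ∈ t, w i • z i ∈ convexHull R s := by
  classical
  have hpos : ∀ i ∈ t, w i ≠ 0 → 0 < w i := fun i hi hw => (h₀ i hi).lt_of_ne' hw
  rw [← sum_filter_of_ne fun i hi h => hpos i hi (left_ne_zero_of_smul h)]
  refine (convex_convexHull R s).sum_mem (fun i hi => h₀ i (mem_filter.1 hi).1) ?_
    fun i hi => subset_convexHull R s (hz i (mem_filter.1 hi).1 (mem_filter.1 hi).2)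
  rwa [sum_filter_of_ne hpos]

theorem eq_pos_convex_span_of_mem_convexHull_of_forall_map_eq {𝕜 E : Type*} [Field 𝕜]
    [LinearOrder 𝕜] [IsStrictOrderedRing 𝕜] [AddCommGroup E] [Module 𝕜 E]
    [FiniteDimensional 𝕜 E] {s : Set E} {L : E →ₗ[𝕜] 𝕜} {c : 𝕜} (hc : c ≠ 0)
    (hs : ∀ y ∈ s, L y = c) {x : E} (hx : x ∈ convexHull 𝕜 s) :
    ∃ (N : ℕ) (w : Fin N → 𝕜) (z : Fin N → E), N ≤ finrank 𝕜 E ∧ (∀ i, 0 < w i) ∧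
      ∑ i, w i = 1 ∧ (∀ i, z i ∈ s) ∧ ∑ i, w i • z i = x := by
  obtain ⟨ι, _, z, w, hzs, hz, hw₀, hw₁, rfl⟩ := eq_pos_convex_span_of_mem_convexHull hx
  obtain ⟨y, hy⟩ := convexHull_nonempty_iff.1 ⟨_, hx⟩
  have hker : LinearMap.ker L ≠ ⊤ := fun h => hc <| by
    rw [← hs y hy, LinearMap.ker_eq_top.1 h, LinearMap.zero_apply]
  have hspan : vectorSpan 𝕜 (Set.range z) ≤ LinearMap.ker L := by
    rw [vectorSpan_def, Submodule.span_le]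
    rintro _ ⟨_, ⟨i, rfl⟩, _, ⟨j, rfl⟩, rfl⟩
    simp [hs _ (hzs ⟨i, rfl⟩), hs _ (hzs ⟨j, rfl⟩)]
  have hcard : Fintype.card ι ≤ finrank 𝕜 E :=
    hz.card_le_finrank_succ.trans
      (Nat.succ_le_of_lt ((Submodule.finrank_mono hspan).trans_lt (Submodule.finrank_lt hker)))
  let e := Fintype.equivFin ι
  refine ⟨Fintype.card ι, w ∘ e.symm, z ∘ e.symm, hcard, fun i => hw₀ _, ?_,
    fun i => hzs ⟨_, rfl⟩, ?_⟩
  · exact (e.symm.sum_comp w).trans hw₁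
  · exact e.symm.sum_comp fun i => w i • z i

section

variable {Θ A R : Type*} [Fintype Θ] [Fintype A] [CommSemiring R]

def totalMass : (Θ → A → R) →ₗ[R] R :=
  ∑ t, ∑ a, (LinearMap.proj a : (A → R) →ₗ[R] R).comp (LinearMap.proj t)

theorem totalMass_apply (x : Θ → A → R) : totalMass x = ∑ t, ∑ a, x t a := by
  simp [totalMass]

theorem totalMass_eq_card {π : Θ → A → R} (hπ : ∀ t, ∑ a, π t a = 1) :
    totalMass π = Fintype.card Θ := by
  simp [totalMass_apply, hπ]

end

theorem single_player_mediated_implementable_eq_convex_hull_general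
    {Θ A : Type} [Fintype Θ] [Fintype A]
    (F : Θ → ℝ) (hF1 : ∑ t, F t = 1)
    (W : Θ → (A → ℝ) → ℝ) :
    {f : Θ → A → ℝ |
        ∃ (N : ℕ) (D : Fin N → ℝ) (hd : Fin N → Θ → A → ℝ),
          (∀ φ, 0 ≤ D φ) ∧ (∑ φ, D φ = 1) ∧
          (∀ φ t, (∀ a, 0 ≤ hd φ t a) ∧ ∑ a, hd φ t a = 1) ∧
          (∀ φ, 0 < D φ → ∀ t, 0 < F t → ∀ t', W t (hd φ t') ≤ W t (hd φ t)) ∧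
          (∀ t a, f t a = ∑ φ, D φ * hd φ t a)}
      = convexHull ℝ {π : Θ → A → ℝ |
          (∀ t, (∀ a, 0 ≤ π t a) ∧ ∑ a, π t a = 1) ∧
          ∀ t, 0 < F t → ∀ t', W t (π t') ≤ W t (π t)} ∧
    ∀ f ∈ convexHull ℝ {π : Θ → A → ℝ |
          (∀ t, (∀ a, 0 ≤ π t a) ∧ ∑ a, π t a = 1) ∧
          ∀ t, 0 < F t → ∀ t', W t (π t') ≤ W t (π t)},
      ∃ (N : ℕ) (D : Fin N → ℝ) (hd : Fin N → Θ → A → ℝ),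
        N ≤ Fintype.card Θ * Fintype.card A ∧
        (∀ φ, 0 ≤ D φ) ∧ (∑ φ, D φ = 1) ∧
        (∀ φ t, (∀ a, 0 ≤ hd φ t a) ∧ ∑ a, hd φ t a = 1) ∧
        (∀ φ, 0 < D φ → ∀ t, 0 < F t → ∀ t', W t (hd φ t') ≤ W t (hd φ t)) ∧
        (∀ t a, f t a = ∑ φ, D φ * hd φ t a) := by
  set S := {π : Θ → A → ℝ | (∀ t, (∀ a, 0 ≤ π t a) ∧ ∑ a, π t a = 1) ∧
    ∀ t, 0 < F t → ∀ t', W t (π t') ≤ W t (π t)}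
  have : Nonempty Θ := univ_nonempty_iff.1 (nonempty_of_sum_ne_zero (hF1 ▸ one_ne_zero))
  have hsmall : ∀ f ∈ convexHull ℝ S, ∃ (N : ℕ) (D : Fin N → ℝ) (hd : Fin N → Θ → A → ℝ),
      N ≤ Fintype.card Θ * Fintype.card A ∧
      (∀ φ, 0 ≤ D φ) ∧ (∑ φ, D φ = 1) ∧
      (∀ φ t, (∀ a, 0 ≤ hd φ t a) ∧ ∑ a, hd φ t a = 1) ∧
      (∀ φ, 0 < D φ → ∀ t, 0 < F t → ∀ t', W t (hd φ t') ≤ W t (hd φ t)) ∧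
      (∀ t a, f t a = ∑ φ, D φ * hd φ t a) := by
    intro f hf
    obtain ⟨N, D, hd, hN, hD₀, hD₁, hdS, rfl⟩ :=
      eq_pos_convex_span_of_mem_convexHull_of_forall_map_eq
        (Nat.cast_ne_zero.2 Fintype.card_ne_zero)
        (fun π hπ => totalMass_eq_card fun t => (hπ.1 t).2) hf
    have hdim : finrank ℝ (Θ → A → ℝ) = Fintype.card Θ * Fintype.card A := by
      rw [finrank_pi_fintype]; simp
    exact ⟨N, D, hd, hdim ▸ hN, fun φ => (hD₀ φ).le, hD₁, fun φ => (hdS φ).1,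
      fun φ _ => (hdS φ).2, fun t a => by simp [Finset.sum_apply]⟩
  refine ⟨subset_antisymm ?_ fun f hf => ?_, hsmall⟩
  · rintro f ⟨N, D, hd, hD₀, hD₁, hd_row, hd_ic, hf_eq⟩
    have hf : f = ∑ φ, D φ • hd φ := by ext t a; simp [hf_eq, Finset.sum_apply]
    exact hf ▸ sum_smul_mem_convexHull_of_pos (fun φ _ => hD₀ φ) hD₁
      fun φ _ hφ => ⟨hd_row φ, hd_ic φ hφ⟩
  · obtain ⟨N, D, hd, -, hmech⟩ := hsmall f hf
    exact ⟨N, D, hd, hmech⟩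

/-- For a single player, the set of allocation choice functions truthfully implementable in
`F`-Bayes-Nash equilibrium by direct mediated mechanisms equals the convex hull of the set
`Π₁(F)` of `F`-incentive-compatible functions; moreover any member of this convex hull is
implementable with a message set of cardinality at most `|Θ| · |A|`. -/
theorem single_player_mediated_implementable_eq_convex_hull
    {Θ A : Type} [Fintype Θ] [Fintype A]
    (F : Θ → ℝ) (hF0 : ∀ t, 0 ≤ F t) (hF1 : ∑ t, F t = 1)
    (W : Θ → (A → ℝ) → ℝ) :
    {f : Θ → A → ℝ |
        ∃ (N : ℕ) (D : Fin N → ℝ) (hd : Fin N → Θ → A → ℝ),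
          (∀ φ, 0 ≤ D φ) ∧ (∑ φ, D φ = 1) ∧
          (∀ φ t, (∀ a, 0 ≤ hd φ t a) ∧ ∑ a, hd φ t a = 1) ∧
          (∀ φ, 0 < D φ → ∀ t, 0 < F t → ∀ t', W t (hd φ t') ≤ W t (hd φ t)) ∧
          (∀ t a, f t a = ∑ φ, D φ * hd φ t a)}
      = convexHull ℝ {π : Θ → A → ℝ |
          (∀ t, (∀ a, 0 ≤ π t a) ∧ ∑ a, π t a = 1) ∧
          ∀ t, 0 < F t → ∀ t', W t (π t') ≤ W t (π t)} ∧
    ∀ f ∈ convexHull ℝ {π : Θ → A → ℝ |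
          (∀ t, (∀ a, 0 ≤ π t a) ∧ ∑ a, π t a = 1) ∧
          ∀ t, 0 < F t → ∀ t', W t (π t') ≤ W t (π t)},
      ∃ (N : ℕ) (D : Fin N → ℝ) (hd : Fin N → Θ → A → ℝ),
        N ≤ Fintype.card Θ * Fintype.card A ∧
        (∀ φ, 0 ≤ D φ) ∧ (∑ φ, D φ = 1) ∧
        (∀ φ t, (∀ a, 0 ≤ hd φ t a) ∧ ∑ a, hd φ t a = 1) ∧
        (∀ φ, 0 < D φ → ∀ t, 0 < F t → ∀ t', W t (hd φ t') ≤ W t (hd φ t)) ∧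
        (∀ t a, f t a = ∑ φ, D φ * hd φ t a) :=
  single_player_mediated_implementable_eq_convex_hull_general F hF1 W
end

section
/- (Existence of a θ-coupling matrix) Let f : Θ → Δ(A) and suppose for each i ∈ [n], f = Σ_{m_i∈M_i} a_i^{m_i} f_i^{m_i} is a convex-combination representation with nonnegative coefficients a_i^{m_i} summing to 1 and f_i^{m_i} : Θ → Δ(A). Then for each fixed θ ∈ Θ, there exists a nonnegative array ā = (a^m)_{m∈M}, M = Π_i M_i, with marginals Σ_{m_{-i}} a^{(m_i, m_{-i})} = a_i^{m_i} for all m_i, i, and a function k^θ : M → Δ(A) such that Σ_{m_{-i}} a^{(m_i, m_{-i})} k^θ(m_i, m_{-i}) = a_i^{m_i} f_i^{m_i}(θ) for all m_i ∈ M_i and all i. Explicitly, one may take ξ(m, α) = (Π_i a_i^{m_i} f_i^{m_i}(α|θ)) / f(α|θ)^{n-1} when f(α|θ) > 0 and 0 otherwise, with a^m = Σ_α ξ(m, α) and k^θ(·|m) = ξ(m, ·)/a^m when a^m > 0. -/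
open Finset

/-!
Draw an outcome `α` from `f` and then, conditionally independently, each `m_i` with law
`a_i^{m_i} f_i^{m_i}(α) / f(α)`. The joint weight of `(m, α)` is
`ξ(m, α) = ∏_i a_i^{m_i} f_i^{m_i}(α) / f(α)^(n-1)`, and summing out `m_{-i}` leaves
`a_i^{m_i} f_i^{m_i}(α)` because `Σ_{m_j} a_j^{m_j} f_j^{m_j}(α) = f(α)` for every `j`.
Then `ā` is the `m`-marginal of `ξ` and `k` the conditional law of `α` given `m`.
-/

theorem Fintype.sum_ite_apply_eq_prod {ι : Type*} [Fintype ι] [DecidableEq ι] {M : ι → Type*}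
    [∀ i, Fintype (M i)] [∀ i, DecidableEq (M i)] {R : Type*} [CommSemiring R]
    (g : ∀ j, M j → R) (i : ι) (mi : M i) :
    (∑ m : ∀ j, M j, if m i = mi then ∏ j, g j (m j) else 0)
      = g i mi * ∏ j ∈ univ.erase i, ∑ mj, g j mj := by
  set h := Function.update g i fun x => if x = mi then g i x else 0
  have h_erase {j : ι} (hj : j ∈ univ.erase i) : h j = g j := by
    simp [h, Function.update_of_ne (ne_of_mem_erase hj)]
  calc (∑ m : ∀ j, M j, if m i = mi then ∏ j, g j (m j) else 0)
      = ∑ m : ∀ j, M j, ∏ j, h j (m j) := by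
        refine Finset.sum_congr rfl fun m _ => ?_
        rw [← mul_prod_erase _ _ (mem_univ i), ← mul_prod_erase _ _ (mem_univ i),
          Finset.prod_congr rfl fun j hj => congrFun (h_erase hj) (m j)]
        split_ifs with hm <;> simp [h, hm]
    _ = ∏ j, ∑ mj, h j mj := (Fintype.prod_sum h).symm
    _ = g i mi * ∏ j ∈ univ.erase i, ∑ mj, g j mj := by
        rw [← mul_prod_erase _ _ (mem_univ i),
          Finset.prod_congr rfl fun j hj => by rw [h_erase hj]]
        simp [h]

theorem exists_mul_kernel_eq {X A : Type*} [Fintype A] (ξ : X → A → ℝ) (hξ : ∀ x α, 0 ≤ ξ x α)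
    (p : A → ℝ) (hp0 : ∀ α, 0 ≤ p α) (hp1 : ∑ α, p α = 1) :
    ∃ k : X → A → ℝ, (∀ x, (∀ α, 0 ≤ k x α) ∧ ∑ α, k x α = 1) ∧
      ∀ x α, (∑ β, ξ x β) * k x α = ξ x α := by
  classical
  refine ⟨fun x α => if ∑ β, ξ x β = 0 then p α else ξ x α / ∑ β, ξ x β,
    fun x => ?_, fun x α => ?_⟩
  all_goals by_cases hx : ∑ β, ξ x β = 0 <;> simp only [hx, if_true, if_false]
  · exact ⟨hp0, hp1⟩
  · exact ⟨fun α => div_nonneg (hξ x α) (sum_nonneg fun β _ => hξ x β),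
      by rw [← sum_div, div_self hx]⟩
  · rw [zero_mul, ((sum_eq_zero_iff_of_nonneg fun β _ => hξ x β).mp hx α (mem_univ α))]
  · exact mul_div_cancel₀ _ hx

section Coupling

variable {ι : Type*} [Fintype ι] {M : ι → Type*} {A : Type*}
  (f : A → ℝ) (a : ∀ i, M i → ℝ) (fi : ∀ i, M i → A → ℝ)

noncomputable def couplingWeight (m : ∀ i, M i) (α : A) : ℝ :=
  if 0 < f α then (∏ i, a i (m i) * fi i (m i) α) / f α ^ (Fintype.card ι - 1) else 0

variable {f a fi}

theorem couplingWeight_nonneg (ha0 : ∀ i m, 0 ≤ a i m) (hfi0 : ∀ i m α, 0 ≤ fi i m α)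
    (m : ∀ i, M i) (α : A) : 0 ≤ couplingWeight f a fi m α := by
  unfold couplingWeight
  split_ifs with hα
  · exact div_nonneg (prod_nonneg fun i _ => mul_nonneg (ha0 i _) (hfi0 i _ α)) (by positivity)
  · exact le_rfl

theorem sum_couplingWeight_fiber [DecidableEq ι] [∀ i, Fintype (M i)] [∀ i, DecidableEq (M i)]
    (ha0 : ∀ i m, 0 ≤ a i m) (hfi0 : ∀ i m α, 0 ≤ fi i m α)
    (hrep : ∀ i α, f α = ∑ m, a i m * fi i m α) (i : ι) (mi : M i) (α : A) :
    (∑ m : ∀ j, M j, if m i = mi then couplingWeight f a fi m α else 0) = a i mi * fi i mi α := by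
  have hterm_nonneg : ∀ j mj, 0 ≤ a j mj * fi j mj α :=
    fun j mj => mul_nonneg (ha0 j mj) (hfi0 j mj α)
  by_cases hα : 0 < f α
  · have hprod : ∏ j ∈ univ.erase i, ∑ mj, a j mj * fi j mj α = f α ^ (Fintype.card ι - 1) := by
      rw [prod_congr rfl fun j _ => (hrep j α).symm, prod_const, card_erase_of_mem (mem_univ i),
        card_univ]
    calc (∑ m : ∀ j, M j, if m i = mi then couplingWeight f a fi m α else 0)
        = (∑ m : ∀ j, M j, if m i = mi then ∏ j, a j (m j) * fi j (m j) α else 0)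
            / f α ^ (Fintype.card ι - 1) := by
          rw [sum_div]
          refine sum_congr rfl fun m _ => ?_
          split_ifs <;> simp [couplingWeight, hα]
      _ = a i mi * fi i mi α := by
          rw [Fintype.sum_ite_apply_eq_prod (fun j mj => a j mj * fi j mj α), hprod,
            mul_div_cancel_right₀ _ (by positivity)]
  · -- `f α = 0` is a sum of the nonnegative terms `a i m * fi i m α`, so each of them vanishes.
    have hsum : ∑ m, a i m * fi i m α = 0 :=
      le_antisymm ((hrep i α) ▸ not_lt.mp hα) (sum_nonneg fun m _ => hterm_nonneg i m)
    rw [(sum_eq_zero_iff_of_nonneg fun m _ => hterm_nonneg i m).mp hsum mi (mem_univ mi)]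
    exact sum_eq_zero fun m _ => by simp [couplingWeight, hα]

end Coupling

theorem coupling_matrix_exists_general
    {ι : Type} [Fintype ι] [DecidableEq ι]
    (M : ι → Type) [∀ i, Fintype (M i)] [∀ i, DecidableEq (M i)]
    {A : Type} [Fintype A]
    (f : A → ℝ) (hf0 : ∀ α, 0 ≤ f α) (hf1 : ∑ α, f α = 1)
    (a : ∀ i, M i → ℝ) (ha0 : ∀ i m, 0 ≤ a i m)
    (fi : ∀ i, M i → A → ℝ)
    (hfi : ∀ i m, (∀ α, 0 ≤ fi i m α) ∧ ∑ α, fi i m α = 1)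
    (hrep : ∀ i α, f α = ∑ m, a i m * fi i m α) :
    ∃ (abar : (∀ i, M i) → ℝ) (k : (∀ i, M i) → A → ℝ),
      (∀ m, 0 ≤ abar m) ∧
      (∀ (i : ι) (mi : M i), (∑ m : ∀ j, M j, if m i = mi then abar m else 0) = a i mi) ∧
      (∀ m, (∀ α, 0 ≤ k m α) ∧ ∑ α, k m α = 1) ∧
      (∀ (i : ι) (mi : M i) (α : A),
        (∑ m : ∀ j, M j, if m i = mi then abar m * k m α else 0) = a i mi * fi i mi α) := by
  set ξ := couplingWeight f a fi
  have hξ0 : ∀ m α, 0 ≤ ξ m α := couplingWeight_nonneg ha0 fun i m => (hfi i m).1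
  have hfiber := sum_couplingWeight_fiber ha0 (fun i m => (hfi i m).1) hrep
  obtain ⟨k, hk, hξk⟩ := exists_mul_kernel_eq ξ hξ0 f hf0 hf1
  refine ⟨fun m => ∑ α, ξ m α, k, fun m => sum_nonneg fun α _ => hξ0 m α, fun i mi => ?_, hk,
    fun i mi α => by simp_rw [hξk]; exact hfiber i mi α⟩
  calc (∑ m : ∀ j, M j, if m i = mi then ∑ α, ξ m α else 0)
      = ∑ α, ∑ m : ∀ j, M j, if m i = mi then ξ m α else 0 := by
        simp only [← sum_filter]; exact sum_comm
    _ = ∑ α, a i mi * fi i mi α := sum_congr rfl fun α _ => hfiber i mi α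
    _ = a i mi := by rw [← mul_sum, (hfi i mi).2, mul_one]

/-- Existence of a `θ`-coupling matrix: given convex-combination representations
`f = Σ_{m_i} a_i^{m_i} f_i^{m_i}` of a distribution `f ∈ Δ(A)` for each player `i`, there
is a nonnegative array `ā` on `M = Π_i M_i` with marginals `a_i` and a kernel
`k : M → Δ(A)` with `Σ_{m_{-i}} ā(m_i, m_{-i}) k(m_i, m_{-i}) = a_i^{m_i} f_i^{m_i}`. -/
theorem coupling_matrix_exists
    {ι : Type} [Fintype ι] [DecidableEq ι]
    (M : ι → Type) [∀ i, Fintype (M i)] [∀ i, DecidableEq (M i)]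
    {A : Type} [Fintype A]
    (f : A → ℝ) (hf0 : ∀ α, 0 ≤ f α) (hf1 : ∑ α, f α = 1)
    (a : ∀ i, M i → ℝ) (ha0 : ∀ i m, 0 ≤ a i m) (ha1 : ∀ i, ∑ m, a i m = 1)
    (fi : ∀ i, M i → A → ℝ)
    (hfi : ∀ i m, (∀ α, 0 ≤ fi i m α) ∧ ∑ α, fi i m α = 1)
    (hrep : ∀ i α, f α = ∑ m, a i m * fi i m α) :
    ∃ (abar : (∀ i, M i) → ℝ) (k : (∀ i, M i) → A → ℝ),
      (∀ m, 0 ≤ abar m) ∧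
      (∀ (i : ι) (mi : M i), (∑ m : ∀ j, M j, if m i = mi then abar m else 0) = a i mi) ∧
      (∀ m, (∀ α, 0 ≤ k m α) ∧ ∑ α, k m α = 1) ∧
      (∀ (i : ι) (mi : M i) (α : A),
        (∑ m : ∀ j, M j, if m i = mi then abar m * k m α else 0) = a i mi * fi i mi α) :=
  coupling_matrix_exists_general M f hf0 hf1 a ha0 fi hfi hrep
end
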